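/- arXiv:1010.0623 — 3 statements merged into one kernel-verified Lean document; each statement's English description precedes it below -/
import Mathlib

section
/- Let X be a compact metrizable space, let α = {U_1, …, U_p} be a finite open cover of X, and let φ_1, …, φ_p : X → [0,1] be continuous functions with Σ_{s=1}^{p} φ_s(x) = 1 for all x ∈ X and with the support of φ_s contained in U_s for each s. Let Z be a compact metrizable space, let λ_1, …, λ_M : Z → X be continuous maps, and let ε > 0. Assume that for every z ∈ Z the number of indices m ∈ {1, …, M} with λ_m(z) ∈ ⋃_{s=1}^{p} φ_s⁻¹((0,1)) is strictly less than εM. Then D( λ_1⁻¹(α) ∨ ⋯ ∨ λ_M⁻¹(α) ) < ε · p · M. -/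
open scoped Classical

/-- A finite open cover of a topological space, given as a finite set of open sets
whose union is the whole space. -/
def IsFinOpenCover {X : Type*} [TopologicalSpace X] (α : Finset (Set X)) : Prop :=
  (∀ U ∈ α, IsOpen U) ∧ ⋃₀ (α : Set (Set X)) = Set.univ

/-- `ord α` = (the maximal number of members of `α` containing a common point) − 1. -/
noncomputable def coverOrd {X : Type*} (α : Finset (Set X)) : ℕ :=
  (⨆ x : X, {U | U ∈ α ∧ x ∈ U}.ncard) - 1

/-- `β` refines `α`: every member of `β` is contained in some member of `α`. -/
def CoverRefines {X : Type*} (β α : Finset (Set X)) : Prop :=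
  ∀ V ∈ β, ∃ U ∈ α, V ⊆ U

/-- `D(α)` = the minimum of `ord β` over all finite open covers `β` refining `α`. -/
noncomputable def coverD {X : Type*} [TopologicalSpace X] (α : Finset (Set X)) : ℕ :=
  sInf {n : ℕ | ∃ β : Finset (Set X), IsFinOpenCover β ∧ CoverRefines β α ∧ coverOrd β = n}

/-- The join `λ_1⁻¹(α) ∨ ⋯ ∨ λ_M⁻¹(α)`: its members are the intersections
`⋂_{m} λ_m⁻¹(V_m)` with each `V_m` a member of `α`. -/
noncomputable def joinPreimages {X Y : Type*} {M : ℕ} (lam : Fin M → Y → X)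
    (α : Finset (Set X)) : Finset (Set Y) :=
  (Fintype.piFinset (fun _ : Fin M => α)).image
    (fun g => ⋂ m : Fin M, (lam m) ⁻¹' (g m))

section AuxLW

variable {Z ι : Type*}

def auxW (ψ : ι → Z → ℝ) (v : ι → ℤ) : Set Z :=
  {z | ∀ i j : ι, (ψ i z - v i) + ((v j : ℝ) - ψ j z) < 1 ∧ ψ i z - v i < 1 ∧ (v j : ℝ) - ψ j z < 1}

lemma auxW_isOpen [TopologicalSpace Z] [Finite ι] (ψ : ι → Z → ℝ)
    (hψ : ∀ i, Continuous (ψ i)) (v : ι → ℤ) : IsOpen (auxW ψ v) := by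
  have h : auxW ψ v = ⋂ (i : ι) (j : ι),
      ({z | (ψ i z - v i) + ((v j : ℝ) - ψ j z) < 1} ∩
        ({z | ψ i z - v i < 1} ∩ {z | (v j : ℝ) - ψ j z < 1})) := by
    ext z
    simp only [auxW, Set.mem_setOf_eq, Set.mem_iInter, Set.mem_inter_iff]
  rw [h]
  refine isOpen_iInter_of_finite fun i => isOpen_iInter_of_finite fun j => ?_
  refine IsOpen.inter ?_ (IsOpen.inter ?_ ?_)
  · exact isOpen_lt (((hψ i).sub continuous_const).add (continuous_const.sub (hψ j)))
      continuous_const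
  · exact isOpen_lt ((hψ i).sub continuous_const) continuous_const
  · exact isOpen_lt (continuous_const.sub (hψ j)) continuous_const

lemma mem_auxW_floor (ψ : ι → Z → ℝ) (z : Z) : z ∈ auxW ψ fun i => ⌊ψ i z⌋ := by
  intro i j
  have h1 := Int.lt_floor_add_one (ψ i z)
  have h2 := Int.floor_le (ψ j z)
  have h3 := Int.floor_le (ψ i z)
  have h4 := Int.lt_floor_add_one (ψ j z)
  exact ⟨by linarith, by linarith, by linarith⟩

lemma auxW_card_filter [Fintype ι] (ψ : ι → Z → ℝ) (z : Z) (vs : Finset (ι → ℤ)) :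
    (vs.filter fun v => z ∈ auxW ψ v).card ≤
      (Finset.univ.filter fun i : ι => ¬∃ n : ℤ, ψ i z = n).card + 1 := by
  classical
  set F : Finset ι := Finset.univ.filter fun i : ι => ¬∃ n : ℤ, ψ i z = n with hF
  set T : Finset (ι → ℤ) := vs.filter fun v => z ∈ auxW ψ v with hT
  have hmem : ∀ v ∈ T, ∀ i j : ι,
      (ψ i z - v i) + ((v j : ℝ) - ψ j z) < 1 ∧ ψ i z - v i < 1 ∧ (v j : ℝ) - ψ j z < 1 :=
    fun v hv => (Finset.mem_filter.mp hv).2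
  have hlow : ∀ v ∈ T, ∀ i, ⌊ψ i z⌋ ≤ v i := by
    intro v hv i
    have h := (hmem v hv i i).2.1
    have h3 := Int.floor_le (ψ i z)
    have h5 : ((⌊ψ i z⌋ - 1 : ℤ) : ℝ) < (v i : ℝ) := by push_cast; linarith
    have h6 := Int.cast_lt.mp h5
    omega
  have hup : ∀ v ∈ T, ∀ i, v i ≤ ⌊ψ i z⌋ + 1 := by
    intro v hv i
    have h := (hmem v hv i i).2.2
    have h4 := Int.lt_floor_add_one (ψ i z)
    have h5 : (v i : ℝ) < ((⌊ψ i z⌋ + 2 : ℤ) : ℝ) := by push_cast; linarith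
    have h6 := Int.cast_lt.mp h5
    omega
  have hoff : ∀ v ∈ T, ∀ i, i ∉ F → v i = ⌊ψ i z⌋ := by
    intro v hv i hi
    have hex : ∃ n : ℤ, ψ i z = n := by
      by_contra hc
      exact hi (by rw [hF]; exact Finset.mem_filter.mpr ⟨Finset.mem_univ _, hc⟩)
    obtain ⟨n, hn⟩ := hex
    have hfl : ⌊ψ i z⌋ = n := by rw [hn]; exact Int.floor_intCast n
    have h := (hmem v hv i i).2.2
    rw [hn] at h
    have h5 : (v i : ℝ) < ((n + 1 : ℤ) : ℝ) := by push_cast; linarith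
    have h6 := Int.cast_lt.mp h5
    have h7 := hlow v hv i
    omega
  have hchain : ∀ v ∈ T, ∀ w ∈ T, v ≤ w ∨ w ≤ v := by
    intro v hv w hw
    by_contra hc
    push_neg at hc
    obtain ⟨h1, h2⟩ := hc
    rw [Pi.le_def] at h1 h2
    push_neg at h1 h2
    obtain ⟨j, hj⟩ := h1
    obtain ⟨i, hi⟩ := h2
    have hv1 := (hmem v hv i j).1
    have hw1 := (hmem w hw j i).1
    have hij : (w j : ℝ) + 1 ≤ (v j : ℝ) := by exact_mod_cast Int.add_one_le_iff.mpr hj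
    have hji : (v i : ℝ) + 1 ≤ (w i : ℝ) := by exact_mod_cast Int.add_one_le_iff.mpr hi
    linarith
  have hkey : ∀ v ∈ T, ∀ w ∈ T, v ≤ w → (∑ i ∈ F, v i) = (∑ i ∈ F, w i) → v = w := by
    intro v hv w hw hle hsum
    have heqF : ∀ i ∈ F, v i = w i := by
      by_contra hc
      push_neg at hc
      obtain ⟨i, hiF, hne⟩ := hc
      have hlt : (∑ i ∈ F, v i) < ∑ i ∈ F, w i :=
        Finset.sum_lt_sum (fun i _ => hle i) ⟨i, hiF, lt_of_le_of_ne (hle i) hne⟩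
      omega
    funext i
    by_cases hiF : i ∈ F
    · exact heqF i hiF
    · rw [hoff v hv i hiF, hoff w hw i hiF]
  have hinj : Set.InjOn (fun v : ι → ℤ => ∑ i ∈ F, v i) T := by
    intro v hv w hw h
    rcases hchain v hv w hw with hle | hle
    · exact hkey v hv w hw hle h
    · exact (hkey w hw v hv hle h.symm).symm
  have hmap : ∀ v ∈ T, (∑ i ∈ F, v i) ∈
      Finset.Icc (∑ i ∈ F, ⌊ψ i z⌋) ((∑ i ∈ F, ⌊ψ i z⌋) + F.card) := by
    intro v hv
    rw [Finset.mem_Icc]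
    constructor
    · exact Finset.sum_le_sum fun i _ => hlow v hv i
    · calc (∑ i ∈ F, v i) ≤ ∑ i ∈ F, (⌊ψ i z⌋ + 1) := Finset.sum_le_sum fun i _ => hup v hv i
        _ = (∑ i ∈ F, ⌊ψ i z⌋) + F.card := by
            rw [Finset.sum_add_distrib, Finset.sum_const, nsmul_eq_mul, mul_one]
  have hcard := Finset.card_le_card_of_injOn _ hmap hinj
  calc T.card ≤ (Finset.Icc (∑ i ∈ F, ⌊ψ i z⌋) ((∑ i ∈ F, ⌊ψ i z⌋) + F.card)).card := hcard
    _ = F.card + 1 := by rw [Int.card_Icc]; omega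

end AuxLW

/-- if for every `z ∈ Z` fewer than `εM` of the points `λ_m(z)` lie in
`⋃_s φ_s⁻¹((0,1))`, then `D(λ_1⁻¹(α) ∨ ⋯ ∨ λ_M⁻¹(α)) < ε·p·M`, where
`α = {U_1, …, U_p}` and `(φ_s)` is a partition of unity subordinate to `α`. -/
theorem coverD_join_lt {X Z : Type*}
    [TopologicalSpace X] [CompactSpace X] [TopologicalSpace.MetrizableSpace X]
    [TopologicalSpace Z] [CompactSpace Z] [TopologicalSpace.MetrizableSpace Z]
    {p : ℕ} (hp : 1 ≤ p) (U : Fin p → Set X)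
    (hUopen : ∀ s, IsOpen (U s)) (hUcover : ⋃ s, U s = Set.univ)
    (φ : Fin p → X → ℝ) (hφcont : ∀ s, Continuous (φ s))
    (hφ0 : ∀ s x, 0 ≤ φ s x) (hφ1 : ∀ s x, φ s x ≤ 1)
    (hφsum : ∀ x, ∑ s, φ s x = 1) (hφsupp : ∀ s, tsupport (φ s) ⊆ U s)
    {M : ℕ} (hM : 1 ≤ M) (lam : Fin M → Z → X) (hlam : ∀ m, Continuous (lam m))
    (ε : ℝ) (hε : 0 < ε)
    (hcount : ∀ z : Z,
      ({m : Fin M | lam m z ∈ ⋃ s, {x | 0 < φ s x ∧ φ s x < 1}}.ncard : ℝ) < ε * M) :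
    (coverD (joinPreimages lam (Finset.univ.image U)) : ℝ) < ε * p * M := by
  classical
  haveI : Nonempty (Fin p) := ⟨⟨0, hp⟩⟩
  have hp0 : (0:ℝ) < (p:ℝ) := by exact_mod_cast hp
  have hM0 : (0:ℝ) < (M:ℝ) := by exact_mod_cast hM
  set ψ : (Fin M × Fin p) → Z → ℝ := fun i z => ((2 * p : ℕ) : ℝ) * φ i.2 (lam i.1 z)
    with hψdef
  have hψcont : ∀ i, Continuous (ψ i) :=
    fun i => continuous_const.mul ((hφcont i.2).comp (hlam i.1))
  set k : ℕ := ⌈ε * M⌉₊ - 1 with hkdef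
  have hεM : 0 < ε * (M:ℝ) := mul_pos hε hM0
  have hceil1 : 1 ≤ ⌈ε * (M:ℝ)⌉₊ := Nat.one_le_ceil_iff.mpr hεM
  have hkε : (k : ℝ) < ε * M := by
    have h1 : (k:ℝ) = (⌈ε * (M:ℝ)⌉₊ : ℝ) - 1 := by
      rw [hkdef, Nat.cast_sub hceil1, Nat.cast_one]
    have h2 : (⌈ε * (M:ℝ)⌉₊ : ℝ) < ε * M + 1 := Nat.ceil_lt_add_one hεM.le
    linarith
  have hBk : ∀ z : Z,
      (Finset.univ.filter fun m : Fin M =>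
        lam m z ∈ ⋃ s, {x | 0 < φ s x ∧ φ s x < 1}).card ≤ k := by
    intro z
    have e : ({m : Fin M | lam m z ∈ ⋃ s, {x | 0 < φ s x ∧ φ s x < 1}} : Set (Fin M)) =
        ↑(Finset.univ.filter fun m : Fin M =>
          lam m z ∈ ⋃ s, {x | 0 < φ s x ∧ φ s x < 1}) := by
      ext m; simp
    have h := hcount z
    rw [e, Set.ncard_coe_finset] at h
    have h2 := Nat.lt_ceil.mpr h
    omega
  set vs : Finset ((Fin M × Fin p) → ℤ) :=
    Fintype.piFinset (fun _ => Finset.Icc (0:ℤ) ((2 * p : ℕ) : ℤ)) with hvsdef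
  set β : Finset (Set Z) := vs.image (fun v => auxW ψ v) with hβdef
  have hψ0 : ∀ i z, 0 ≤ ψ i z := fun i z => mul_nonneg (by positivity) (hφ0 _ _)
  have hψle : ∀ i z, ψ i z ≤ ((2*p:ℕ):ℝ) := by
    intro i z
    calc ψ i z ≤ ((2*p:ℕ):ℝ) * 1 :=
          mul_le_mul_of_nonneg_left (hφ1 _ _) (by positivity)
      _ = _ := mul_one _
  have hvmem : ∀ z : Z, (fun i => ⌊ψ i z⌋) ∈ vs := by
    intro z
    rw [hvsdef, Fintype.mem_piFinset]
    intro i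
    rw [Finset.mem_Icc]
    refine ⟨Int.floor_nonneg.mpr (hψ0 i z), ?_⟩
    calc ⌊ψ i z⌋ ≤ ⌊((2*p:ℕ):ℝ)⌋ := Int.floor_le_floor (hψle i z)
      _ = ((2*p:ℕ):ℤ) := Int.floor_natCast _
  have hcov : IsFinOpenCover β := by
    constructor
    · intro S hS
      rw [hβdef] at hS
      obtain ⟨v, _, rfl⟩ := Finset.mem_image.mp hS
      exact auxW_isOpen ψ hψcont v
    · apply Set.eq_univ_of_forall
      intro z
      exact ⟨auxW ψ (fun i => ⌊ψ i z⌋),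
        Finset.mem_coe.mpr (by rw [hβdef]; exact Finset.mem_image_of_mem _ (hvmem z)),
        mem_auxW_floor ψ z⟩
  have href : CoverRefines β (joinPreimages lam (Finset.univ.image U)) := by
    intro S hS
    rw [hβdef] at hS
    obtain ⟨v, hv, rfl⟩ := Finset.mem_image.mp hS
    rcases Set.eq_empty_or_nonempty (auxW ψ v) with hemp | ⟨z0, hz0⟩
    · refine ⟨⋂ m : Fin M, lam m ⁻¹' (U ⟨0, hp⟩), ?_, by rw [hemp]; exact Set.empty_subset _⟩
      exact Finset.mem_image.mpr ⟨fun _ => U ⟨0, hp⟩,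
        Fintype.mem_piFinset.mpr fun m => Finset.mem_image_of_mem U (Finset.mem_univ _), rfl⟩
    · have hmax : ∀ m : Fin M, ∃ s : Fin p, 1 ≤ v (m, s) := by
        intro m
        by_contra hc
        push_neg at hc
        have hlt : ∀ s : Fin p, ψ (m, s) z0 < (v (m,s) : ℝ) + 1 := by
          intro s
          have h := (hz0 (m,s) (m,s)).2.1
          linarith
        have hsum0 : ∑ s : Fin p, ψ (m,s) z0 = ((2*p:ℕ):ℝ) := by
          simp only [hψdef]
          rw [← Finset.mul_sum, hφsum, mul_one]
        have hsumlt : ((2*p:ℕ):ℝ) < ∑ s : Fin p, ((v (m,s):ℝ) + 1) := by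
          rw [← hsum0]
          exact Finset.sum_lt_sum_of_nonempty Finset.univ_nonempty fun s _ => hlt s
        have hle0 : ∑ s : Fin p, ((v (m,s):ℝ) + 1) ≤ (p:ℝ) := by
          have h1 : ∀ s : Fin p, ((v (m,s):ℝ) + 1) ≤ 1 := by
            intro s
            have h2 : v (m,s) ≤ 0 := by have := hc s; omega
            have h3 : (v (m,s):ℝ) ≤ 0 := by exact_mod_cast h2
            linarith
          calc ∑ s : Fin p, ((v (m,s):ℝ) + 1) ≤ ∑ _s : Fin p, (1:ℝ) :=
                Finset.sum_le_sum fun s _ => h1 s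
            _ = p := by simp
        have : ((2*p:ℕ):ℝ) = 2 * p := by push_cast; ring
        linarith
      choose sm hsm using hmax
      refine ⟨⋂ m : Fin M, lam m ⁻¹' (U (sm m)), ?_, ?_⟩
      · exact Finset.mem_image.mpr ⟨fun m => U (sm m),
          Fintype.mem_piFinset.mpr fun m => Finset.mem_image_of_mem U (Finset.mem_univ _), rfl⟩
      · intro z hz
        rw [Set.mem_iInter]
        intro m
        have hb := (hz (m, sm m) (m, sm m)).2.2
        have h1 : (1:ℝ) ≤ (v (m, sm m) : ℝ) := by exact_mod_cast hsm m
        have hψpos : 0 < ψ (m, sm m) z := by linarith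
        have hφpos : φ (sm m) (lam m z) ≠ 0 := by
          intro h0
          rw [hψdef] at hψpos
          simp [h0] at hψpos
        exact hφsupp (sm m) (subset_tsupport _ hφpos)
  have hmult : ∀ z : Z, ({S | S ∈ β ∧ z ∈ S}).ncard ≤ p * k + 1 := by
    intro z
    have e1 : {S | S ∈ β ∧ z ∈ S} = ↑(β.filter fun S => z ∈ S) := by
      ext S; simp
    rw [e1, Set.ncard_coe_finset]
    have e2 : β.filter (fun S => z ∈ S) ⊆ (vs.filter fun v => z ∈ auxW ψ v).image (auxW ψ) := by
      intro S hS
      obtain ⟨hSβ, hzS⟩ := Finset.mem_filter.mp hS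
      rw [hβdef] at hSβ
      obtain ⟨v, hv, rfl⟩ := Finset.mem_image.mp hSβ
      exact Finset.mem_image_of_mem _ (Finset.mem_filter.mpr ⟨hv, hzS⟩)
    have h3 := auxW_card_filter ψ z vs
    have hF : (Finset.univ.filter fun i : Fin M × Fin p => ¬∃ n : ℤ, ψ i z = n).card ≤ p * k := by
      have hsub : (Finset.univ.filter fun i : Fin M × Fin p => ¬∃ n : ℤ, ψ i z = n) ⊆
          (Finset.univ.filter fun m : Fin M =>
            lam m z ∈ ⋃ s, {x | 0 < φ s x ∧ φ s x < 1}) ×ˢ Finset.univ := by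
        intro i hi
        have hni := (Finset.mem_filter.mp hi).2
        rw [Finset.mem_product]
        refine ⟨Finset.mem_filter.mpr ⟨Finset.mem_univ _, ?_⟩, Finset.mem_univ _⟩
        have h0 : φ i.2 (lam i.1 z) ≠ 0 := by
          intro h; exact hni ⟨0, by simp [hψdef, h]⟩
        have h1 : φ i.2 (lam i.1 z) ≠ 1 := by
          intro h; exact hni ⟨((2*p:ℕ):ℤ), by simp [hψdef, h]⟩
        exact Set.mem_iUnion.mpr ⟨i.2, lt_of_le_of_ne (hφ0 _ _) (Ne.symm h0),
          lt_of_le_of_ne (hφ1 _ _) h1⟩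
      calc (Finset.univ.filter fun i : Fin M × Fin p => ¬∃ n : ℤ, ψ i z = n).card
          ≤ ((Finset.univ.filter fun m : Fin M =>
              lam m z ∈ ⋃ s, {x | 0 < φ s x ∧ φ s x < 1}) ×ˢ
              (Finset.univ : Finset (Fin p))).card := Finset.card_le_card hsub
        _ = (Finset.univ.filter fun m : Fin M =>
              lam m z ∈ ⋃ s, {x | 0 < φ s x ∧ φ s x < 1}).card * p := by
            rw [Finset.card_product]; simp
        _ ≤ k * p := Nat.mul_le_mul_right _ (hBk z)
        _ = p * k := Nat.mul_comm _ _
    calc (β.filter fun S => z ∈ S).card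
        ≤ ((vs.filter fun v => z ∈ auxW ψ v).image (auxW ψ)).card := Finset.card_le_card e2
      _ ≤ (vs.filter fun v => z ∈ auxW ψ v).card := Finset.card_image_le
      _ ≤ (Finset.univ.filter fun i : Fin M × Fin p => ¬∃ n : ℤ, ψ i z = n).card + 1 := h3
      _ ≤ p * k + 1 := by omega
  have hord : coverOrd β ≤ p * k := by
    show (⨆ z : Z, ({S | S ∈ β ∧ z ∈ S}).ncard) - 1 ≤ p * k
    have hsup : (⨆ z : Z, ({S | S ∈ β ∧ z ∈ S}).ncard) ≤ p * k + 1 := by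
      rcases isEmpty_or_nonempty Z with h | h
      · rw [ciSup_of_empty]
        simp [csSup_empty]
      · exact ciSup_le hmult
    omega
  have hle : coverD (joinPreimages lam (Finset.univ.image U)) ≤ p * k :=
    le_trans (Nat.sInf_le ⟨β, hcov, href, rfl⟩) hord
  have hcast : ((coverD (joinPreimages lam (Finset.univ.image U)) : ℕ) : ℝ) ≤ (p:ℝ) * k := by
    have := (Nat.cast_le (α := ℝ)).mpr hle
    push_cast at this
    linarith
  calc ((coverD (joinPreimages lam (Finset.univ.image U)) : ℕ) : ℝ)
      ≤ (p:ℝ) * k := hcast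
    _ < (p:ℝ) * (ε * M) := mul_lt_mul_of_pos_left hkε hp0
    _ = ε * p * M := by ring
end

section
/- Let A be a unital C*-algebra and let τ be a state on A. For every positive element a ∈ A and every ε > 0 there exists δ > 0 such that every positive element b ∈ A with ‖a − b‖ ≤ δ satisfies d_τ(b) > d_τ(a) − ε. In other words, the map a ↦ d_τ(a) is lower semicontinuous on the positive elements of A. -/
open scoped ComplexOrder

/-- A positive unital functional is bounded by the norm on selfadjoint elements. -/
lemma re_apply_abs_le_norm {A : Type*} [CStarAlgebra A] [PartialOrder A] [StarOrderedRing A]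
    (τ : A →ₗ[ℂ] ℂ) (hτpos : ∀ x : A, 0 ≤ x → 0 ≤ τ x) (hτ1 : τ 1 = 1)
    {x : A} (hx : IsSelfAdjoint x) : |(τ x).re| ≤ ‖x‖ := by
  have key : ∀ y : A, 0 ≤ y → 0 ≤ (τ y).re := by
    intro y hy
    have := hτpos y hy
    rw [Complex.le_def] at this
    simpa using this.1
  have hτalg : τ (algebraMap ℝ A ‖x‖) = (‖x‖ : ℂ) := by
    rw [IsScalarTower.algebraMap_apply ℝ ℂ A, Complex.coe_algebraMap,
      Algebra.algebraMap_eq_smul_one, map_smul, hτ1, smul_eq_mul, mul_one]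
  have h1 : x ≤ algebraMap ℝ A ‖x‖ := hx.le_algebraMap_norm_self
  have h2 : -(algebraMap ℝ A ‖x‖) ≤ x := hx.neg_algebraMap_norm_le_self
  have e1 : 0 ≤ (τ (algebraMap ℝ A ‖x‖ - x)).re := key _ (by simpa using h1)
  have e2 : 0 ≤ (τ (x + algebraMap ℝ A ‖x‖)).re := key _ (by
    rw [← sub_nonneg] at h2
    simpa [sub_neg_eq_add, add_comm] using h2)
  rw [map_sub, hτalg] at e1
  rw [map_add, hτalg] at e2
  simp only [Complex.sub_re, Complex.add_re, Complex.ofReal_re] at e1 e2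
  rw [abs_le]
  constructor <;> linarith

/-- The dimension function `d_τ(a) := sup_{ε>0} τ(f_ε(a))`, where
`f_ε(t) = min(t/ε, 1)` is applied to `a` via the continuous functional calculus.
(Since `τ` is positive, its values on positive elements are real, and we take
the real part.) -/
noncomputable def dimFn {A : Type*} [CStarAlgebra A] [PartialOrder A] [StarOrderedRing A]
    (τ : A →ₗ[ℂ] ℂ) (a : A) : ℝ :=
  ⨆ ε : Set.Ioi (0 : ℝ), (τ (cfc (fun t : ℝ => min (t / (ε : ℝ)) 1) a)).re

set_option maxHeartbeats 1000000 in
/-- for a state `τ` on a unital C*-algebra `A`, the map `a ↦ d_τ(a)` is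
lower semicontinuous on the positive elements: for every positive `a` and `ε > 0` there
is `δ > 0` such that every positive `b` with `‖a − b‖ ≤ δ` satisfies
`d_τ(b) > d_τ(a) − ε`. -/
theorem dimFn_lowerSemicontinuous {A : Type*} [CStarAlgebra A]
    [PartialOrder A] [StarOrderedRing A]
    (τ : A →ₗ[ℂ] ℂ) (hτpos : ∀ x : A, 0 ≤ x → 0 ≤ τ x) (hτ1 : τ 1 = 1)
    (a : A) (ha : 0 ≤ a) (ε : ℝ) (hε : 0 < ε) :
    ∃ δ : ℝ, 0 < δ ∧ ∀ b : A, 0 ≤ b → ‖a - b‖ ≤ δ → dimFn τ b > dimFn τ a - ε := by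
  rcases subsingleton_or_nontrivial A with hS | hS
  · exfalso
    have h10 : (1 : A) = 0 := Subsingleton.elim _ _
    rw [h10, map_zero] at hτ1
    exact one_ne_zero hτ1.symm
  haveI : Nonempty (Set.Ioi (0 : ℝ)) := ⟨⟨1, by norm_num⟩⟩
  -- every term of the supremum is at most 1
  have hterm_le_one : ∀ (c : A), 0 ≤ c → ∀ e : Set.Ioi (0 : ℝ),
      (τ (cfc (fun t : ℝ => min (t / (e : ℝ)) 1) c)).re ≤ 1 := by
    intro c hc e
    have hsa : IsSelfAdjoint (cfc (fun t : ℝ => min (t / (e : ℝ)) 1) c) := cfc_predicate _ _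
    have hnorm : ‖cfc (fun t : ℝ => min (t / (e : ℝ)) 1) c‖ ≤ 1 := by
      refine norm_cfc_le zero_le_one fun x hx => ?_
      have hx0 : (0 : ℝ) ≤ x := spectrum_nonneg_of_nonneg hc hx
      rw [Real.norm_eq_abs, abs_le]
      refine ⟨by nlinarith [le_min (div_nonneg hx0 e.2.le) (zero_le_one (α := ℝ))],
        min_le_right _ _⟩
    calc (τ (cfc (fun t : ℝ => min (t / (e : ℝ)) 1) c)).re
        ≤ |(τ (cfc (fun t : ℝ => min (t / (e : ℝ)) 1) c)).re| := le_abs_self _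
      _ ≤ ‖cfc (fun t : ℝ => min (t / (e : ℝ)) 1) c‖ :=
          re_apply_abs_le_norm τ hτpos hτ1 hsa
      _ ≤ 1 := hnorm
  have hbdd : ∀ (c : A), 0 ≤ c → BddAbove (Set.range fun e : Set.Ioi (0 : ℝ) =>
      (τ (cfc (fun t : ℝ => min (t / (e : ℝ)) 1) c)).re) := by
    intro c hc
    refine ⟨1, ?_⟩
    rintro - ⟨e, rfl⟩
    exact hterm_le_one c hc e
  -- pick a good index e₀
  obtain ⟨e₀, he₀⟩ := exists_lt_of_lt_ciSup
    (show dimFn τ a - ε / 2 < dimFn τ a by linarith)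
  set f : ℝ → ℝ := fun t => min (t / (e₀ : ℝ)) 1 with hf_def
  have hf : Continuous f := (continuous_id.div_const _).min continuous_const
  set M : ℝ := ‖a‖ + 1 with hM_def
  -- Weierstrass approximation on [0, M]
  obtain ⟨P, hP⟩ := exists_polynomial_near_of_continuousOn 0 M f hf.continuousOn (ε / 8)
    (by positivity)
  -- continuity of polynomial evaluation at a
  have hcont : ContinuousAt (fun x : A => Polynomial.aeval x P) a :=
    P.continuous_aeval.continuousAt
  rw [Metric.continuousAt_iff] at hcont
  obtain ⟨δ₁, hδ₁pos, hδ₁⟩ := hcont (ε / 8) (by positivity)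
  refine ⟨min (δ₁ / 2) 1, by positivity, fun b hb hab => ?_⟩
  have hab₁ : ‖a - b‖ ≤ 1 := hab.trans (min_le_right _ _)
  have hab₂ : ‖a - b‖ < δ₁ := lt_of_le_of_lt (hab.trans (min_le_left _ _)) (by linarith)
  have hbnorm : ‖b‖ ≤ M := by
    have h := norm_sub_norm_le b a
    rw [norm_sub_rev a b] at hab₁
    simp only [hM_def]
    linarith
  have hanorm : ‖a‖ ≤ M := by simp [hM_def]
  have hspec : ∀ (c : A), 0 ≤ c → ‖c‖ ≤ M → ∀ x ∈ spectrum ℝ c, x ∈ Set.Icc (0 : ℝ) M := by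
    intro c hc hcM x hx
    refine ⟨spectrum_nonneg_of_nonneg hc hx, ?_⟩
    have := spectrum.norm_le_norm_of_mem hx
    rw [Real.norm_eq_abs] at this
    calc x ≤ |x| := le_abs_self x
      _ ≤ ‖c‖ := this
      _ ≤ M := hcM
  -- cfc f c is close to aeval c P for c ∈ {a, b}
  have hclose : ∀ (c : A), 0 ≤ c → ‖c‖ ≤ M → ‖cfc f c - Polynomial.aeval c P‖ ≤ ε / 8 := by
    intro c hc hcM
    rw [← cfc_polynomial P c hc.isSelfAdjoint,
      ← cfc_sub f P.eval c hf.continuousOn P.continuous.continuousOn]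
    refine norm_cfc_le (by positivity) fun x hx => ?_
    have hxm := hspec c hc hcM x hx
    rw [Real.norm_eq_abs, abs_sub_comm]
    exact (hP x hxm).le
  have hPa : ‖Polynomial.aeval a P - Polynomial.aeval b P‖ ≤ ε / 8 := by
    have := hδ₁ (x := b) (by rwa [dist_eq_norm, ← norm_sub_rev])
    rw [dist_eq_norm, ← norm_sub_rev] at this
    exact this.le
  have htri : ‖cfc f a - cfc f b‖ ≤ 3 * (ε / 8) := by
    have h1 := hclose a ha hanorm
    have h3 : ‖Polynomial.aeval b P - cfc f b‖ ≤ ε / 8 := by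
      rw [norm_sub_rev]; exact hclose b hb hbnorm
    have key : cfc f a - cfc f b = (cfc f a - Polynomial.aeval a P)
        + (Polynomial.aeval a P - Polynomial.aeval b P)
        + (Polynomial.aeval b P - cfc f b) := by abel
    rw [key]
    have t1 := norm_add_le ((cfc f a - Polynomial.aeval a P)
        + (Polynomial.aeval a P - Polynomial.aeval b P)) (Polynomial.aeval b P - cfc f b)
    have t2 := norm_add_le (cfc f a - Polynomial.aeval a P)
        (Polynomial.aeval a P - Polynomial.aeval b P)
    linarith
  -- transfer the estimate through τ
  have hsa : IsSelfAdjoint (cfc f a - cfc f b) :=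
    (cfc_predicate f a).sub (cfc_predicate f b)
  have hτdiff := re_apply_abs_le_norm τ hτpos hτ1 hsa
  rw [map_sub] at hτdiff
  have hre : (τ (cfc f a)).re - (τ (cfc f b)).re ≤ 3 * (ε / 8) := by
    have := (abs_le.mp (hτdiff.trans htri)).2
    simpa [Complex.sub_re] using this
  have hle : (τ (cfc f b)).re ≤ dimFn τ b := le_ciSup (hbdd b hb) e₀
  simp only [dimFn] at hle ⊢
  have : dimFn τ a - ε / 2 < (τ (cfc f a)).re := he₀
  simp only [dimFn] at this
  linarith
end

section
/- Let A be a C*-algebra and let {C_i} be a collection of C*-subalgebras of A with the following property: for every finite subset F ⊆ A and every ε > 0 there is some C_i with F ⊆_ε C_i. Then for any positive elements a, b ∈ A with a ≾ b and any ε > 0, there exist an index i and positive elements a_i, b_i ∈ C_i such that ‖a − a_i‖ ≤ ε, ‖b − b_i‖ ≤ ε, (a_i − ε)_+ ≾ b_i with the Cuntz subequivalence witnessed inside C_i, and b_i ≾ b in A. -/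
/-!
Pick `x, y` with `x b y` close to `a` and approximate `a, b, x, y` from one `C i`. If `b ≥ 0` and
`c ∈ C i` satisfies `‖b - c‖ ≤ δ`, the cut-down `b' = (ℜ c - δ)₊ ∈ C i` is positive, `2δ`-close
to `b`, and `ℜ c - δ ≤ b`; `a'` is built from `a` in the same way. Then `‖x' b' y' - a'‖ ≤ ε`,
hence `a' - ε ≤ ℜ (x' b' y') ≤ ½ (y' + x'⋆)⋆ b' (y' + x'⋆)`.

Both Cuntz relations come from one principle: `a - ε ≤ c` implies `(a - ε)₊ ≾ c` inside any closed
star subalgebra containing `a` and `c`. With `p = (a - ε)₊` and `h = p ^ (1 / 2)`,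
`p ≾ p² = h (a - ε) h ≤ h c h ≾ c`, and `d ≤ c` gives `d ≾ c` because, with
`G = (c + θ) ^ (-1 / 2)`, `‖d ^ (1 / 2) G² c d ^ (1 / 2) - d‖ = θ ‖G d G‖ ≤ θ ‖G c G‖ ≤ θ`.
-/

open Filter Topology

/-- Cuntz subequivalence in a C*-algebra: `a ≾ b` iff there are sequences `(x_n)`,
`(y_n)` with `x_n * b * y_n → a` in norm. -/
def CuntzLE {A : Type*} [CStarAlgebra A] (a b : A) : Prop :=
  ∃ x y : ℕ → A, Tendsto (fun n => x n * b * y n) atTop (𝓝 a)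

/-- Cuntz subequivalence witnessed inside a subset `C` of a C*-algebra: the witnessing
sequences can be taken in `C`. -/
def CuntzLEIn {A : Type*} [CStarAlgebra A] (C : Set A) (a b : A) : Prop :=
  ∃ x y : ℕ → A, (∀ n, x n ∈ C) ∧ (∀ n, y n ∈ C) ∧
    Tendsto (fun n => x n * b * y n) atTop (𝓝 a)

open scoped ComplexStarModule

section CuntzLEIn

variable {A : Type*} [CStarAlgebra A]

lemma cuntzLEIn_iff_mem_closure {S : Set A} {a b : A} :
    CuntzLEIn S a b ↔ a ∈ closure (Set.image2 (fun x y => x * b * y) S S) := by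
  rw [mem_closure_iff_seq_limit]
  constructor
  · rintro ⟨x, y, hx, hy, h⟩
    exact ⟨fun n => x n * b * y n, fun n => Set.mem_image2_of_mem (hx n) (hy n), h⟩
  · rintro ⟨z, hz, h⟩
    choose x hx y hy hxy using hz
    exact ⟨x, y, hx, hy, by simpa only [hxy] using h⟩

lemma CuntzLEIn.cuntzLE {S : Set A} {a b : A} (h : CuntzLEIn S a b) : CuntzLE a b :=
  let ⟨x, y, _, _, hxy⟩ := h
  ⟨x, y, hxy⟩

lemma cuntzLEIn_of_forall_exists_norm_sub_le {S : Set A} {a b : A}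
    (h : ∀ ε > 0, ∃ x ∈ S, ∃ y ∈ S, ‖x * b * y - a‖ ≤ ε) : CuntzLEIn S a b := by
  rw [cuntzLEIn_iff_mem_closure, Metric.mem_closure_iff]
  intro ε hε
  obtain ⟨x, hx, y, hy, hxy⟩ := h (ε / 2) (half_pos hε)
  exact ⟨_, Set.mem_image2_of_mem hx hy, by rw [dist_comm, dist_eq_norm]; linarith⟩

lemma cuntzLEIn_mul_mul {S : Set A} {x y : A} (hx : x ∈ S) (hy : y ∈ S) (b : A) :
    CuntzLEIn S (x * b * y) b :=
  cuntzLEIn_iff_mem_closure.2 (subset_closure (Set.mem_image2_of_mem hx hy))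

lemma CuntzLEIn.trans {T : Type*} [SetLike T A] [MulMemClass T A] {S : T} {a b c : A}
    (hab : CuntzLEIn S a b) (hbc : CuntzLEIn S b c) : CuntzLEIn S a c := by
  rw [cuntzLEIn_iff_mem_closure] at *
  refine closure_minimal ?_ isClosed_closure hab
  rintro _ ⟨x, hx, y, hy, rfl⟩
  refine map_mem_closure (f := fun z => x * z * y) (by fun_prop) hbc ?_
  rintro _ ⟨x', hx', y', hy', rfl⟩
  exact ⟨x * x', mul_mem hx hx', y' * y, mul_mem hy' hy, by simp only [mul_assoc]⟩

end CuntzLEIn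

lemma exists_pos_norm_mul_mul_sub_lt {R : Type*} [SeminormedRing R] (x b y : R) {ε : ℝ}
    (hε : 0 < ε) : ∃ η > 0, ∀ x' b' y' : R, ‖x' - x‖ < η → ‖b' - b‖ < η → ‖y' - y‖ < η →
      ‖x' * b' * y' - x * b * y‖ < ε := by
  have hc : Continuous fun p : R × R × R => p.1 * p.2.1 * p.2.2 := by fun_prop
  obtain ⟨η, hη, h⟩ := Metric.continuousAt_iff.1 (hc.continuousAt (x := (x, b, y))) ε hε
  refine ⟨η, hη, fun x' b' y' hx hb hy => ?_⟩
  simpa [dist_eq_norm] using h (x := (x', b', y')) (by simp [dist_eq_norm, hx, hb, hy])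

section CStarAlgebra

variable {A : Type*} [CStarAlgebra A]

lemma realPart_mem {S : StarSubalgebra ℂ A} {x : A} (hx : x ∈ S) : (ℜ x : A) ∈ S := by
  rw [realPart_apply_coe, ← Complex.coe_smul]
  exact S.smul_mem (add_mem hx (star_mem hx)) _

lemma IsSelfAdjoint.norm_realPart_sub_le {a : A} (ha : IsSelfAdjoint a) (z : A) :
    ‖(ℜ z : A) - a‖ ≤ ‖z - a‖ := by
  simpa [ha.coe_realPart] using realPart.norm_le (z - a)

variable [PartialOrder A] [StarOrderedRing A]

lemma IsSelfAdjoint.le_algebraMap_of_norm_le {x : A} (hx : IsSelfAdjoint x) {δ : ℝ}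
    (h : ‖x‖ ≤ δ) : x ≤ algebraMap ℝ A δ :=
  hx.le_algebraMap_norm_self.trans (algebraMap_mono A h)

lemma realPart_mul_mul_le {b : A} (hb : 0 ≤ b) (x y : A) :
    (ℜ (x * b * y) : A) ≤ (2⁻¹ : ℝ) • (star (y + star x) * b * (y + star x)) := by
  have hb' : star b = b := (IsSelfAdjoint.of_nonneg hb).star_eq
  rw [← sub_nonneg]
  have : (2⁻¹ : ℝ) • (star (y + star x) * b * (y + star x)) - ℜ (x * b * y)
      = (2⁻¹ : ℝ) • (star y * b * y + x * b * star x) := by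
    rw [realPart_apply_coe, ← smul_sub]
    congr 1
    simp only [star_add, star_star, star_mul, hb']
    noncomm_ring
  rw [this]
  exact smul_nonneg (by norm_num)
    (add_nonneg (star_left_conjugate_nonneg hb y) (star_right_conjugate_nonneg hb x))

lemma norm_sub_cfc_max_sub_le {s : A} (hs : IsSelfAdjoint s) {δ : ℝ} (hδ : 0 ≤ δ)
    (h : algebraMap ℝ A (-δ) ≤ s) : ‖s - cfc (fun t => max (t - δ) 0) s‖ ≤ δ := by
  rw [algebraMap_le_iff_le_spectrum] at h
  nth_rw 1 [← cfc_id' ℝ s]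
  rw [← cfc_sub _ _]
  refine norm_cfc_le hδ fun t ht => ?_
  have := h t ht
  rw [Real.norm_eq_abs, abs_le]
  constructor <;> cases max_cases (t - δ) 0 <;> linarith

/-- `t ↦ (t + θ) ^ (-1 / 2)`, extended by its value at `0` to `t < 0` so that it is continuous. -/
noncomputable def invSqrtAdd (θ t : ℝ) : ℝ := (√(max t 0 + θ))⁻¹

lemma continuous_invSqrtAdd {θ : ℝ} (hθ : 0 < θ) : Continuous (invSqrtAdd θ) :=
  Continuous.inv₀ (by fun_prop) fun t => (Real.sqrt_pos.2 (by positivity)).ne'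

lemma invSqrtAdd_mul_self {θ t : ℝ} (hθ : 0 ≤ θ) (ht : 0 ≤ t) :
    invSqrtAdd θ t * invSqrtAdd θ t = (t + θ)⁻¹ := by
  rw [invSqrtAdd, ← mul_inv, Real.mul_self_sqrt (by positivity), max_eq_left ht]

lemma cfc_invSqrtAdd_mul_self_mul {c : A} (hc : 0 ≤ c) {θ : ℝ} (hθ : 0 < θ) :
    cfc (invSqrtAdd θ) c * cfc (invSqrtAdd θ) c * c
      = 1 - θ • (cfc (invSqrtAdd θ) c * cfc (invSqrtAdd θ) c) := by
  have hg := continuous_invSqrtAdd hθ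
  set g := invSqrtAdd θ
  calc cfc g c * cfc g c * c = cfc (fun t => g t * g t * t) c := by
        rw [cfc_mul (fun t => g t * g t) (fun t => t) c (hg.mul hg).continuousOn,
          cfc_mul g g c hg.continuousOn hg.continuousOn, cfc_id' ℝ c]
    _ = cfc (fun t => 1 - θ * (g t * g t)) c := cfc_congr fun t ht => by
        have ht0 := spectrum_nonneg_of_nonneg hc ht
        have : 0 < t + θ := by positivity
        rw [invSqrtAdd_mul_self hθ.le ht0]
        field_simp
        ring
    _ = 1 - θ • (cfc g c * cfc g c) := by
        rw [cfc_sub (fun _ => 1) (fun t => θ * (g t * g t)) c continuousOn_const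
            (continuous_const.mul (hg.mul hg)).continuousOn,
          cfc_const_one ℝ c, cfc_const_mul θ (fun t => g t * g t) c (hg.mul hg).continuousOn,
          cfc_mul g g c hg.continuousOn hg.continuousOn]

lemma norm_cfc_invSqrtAdd_mul_mul_le_one {c : A} (hc : 0 ≤ c) {θ : ℝ} (hθ : 0 < θ) :
    ‖cfc (invSqrtAdd θ) c * c * cfc (invSqrtAdd θ) c‖ ≤ 1 := by
  have hg := continuous_invSqrtAdd hθ
  set g := invSqrtAdd θ
  have hcfc : cfc g c * c * cfc g c = cfc (fun t => g t * t * g t) c := by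
    rw [cfc_mul (fun t => g t * t) g c (hg.mul continuous_id).continuousOn hg.continuousOn,
      cfc_mul g (fun t => t) c hg.continuousOn, cfc_id' ℝ c]
  rw [hcfc]
  refine norm_cfc_le zero_le_one fun t ht => ?_
  have ht0 := spectrum_nonneg_of_nonneg hc ht
  have : g t * t * g t = t / (t + θ) := by
    rw [mul_right_comm, invSqrtAdd_mul_self hθ.le ht0, div_eq_inv_mul, mul_comm]
  rw [this, Real.norm_eq_abs, abs_of_nonneg (by positivity)]
  exact (div_le_one (by positivity)).2 (by linarith)

variable {S : StarSubalgebra ℂ A}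

lemma cuntzLEIn_self_mul_self (hS : IsClosed (S : Set A)) {p : A} (hp : 0 ≤ p) (hpS : p ∈ S) :
    CuntzLEIn S p (p * p) := by
  refine cuntzLEIn_of_forall_exists_norm_sub_le fun θ hθ => ?_
  set G := cfc (invSqrtAdd θ) p
  have hGS : G ∈ S := cfc_mem (hs := hS) _ hpS
  have hGp : Commute G p := (Commute.refl p).cfc_real _
  refine ⟨G * G, mul_mem hGS hGS, 1, one_mem S, ?_⟩
  have hexpand : G * G * (p * p) * 1 - p = -(θ • (G * p * G)) := by
    rw [mul_one, ← mul_assoc, cfc_invSqrtAdd_mul_self_mul hp hθ, mul_assoc G p G, ← hGp.eq]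
    simp only [sub_mul, one_mul, smul_mul_assoc, mul_assoc]
    abel
  rw [hexpand, norm_neg, norm_smul, Real.norm_of_nonneg hθ.le]
  exact mul_le_of_le_one_right hθ.le (norm_cfc_invSqrtAdd_mul_mul_le_one hp hθ)

lemma cuntzLEIn_of_le (hS : IsClosed (S : Set A)) {d c : A} (hd : 0 ≤ d) (hdc : d ≤ c)
    (hdS : d ∈ S) (hcS : c ∈ S) : CuntzLEIn S d c := by
  have hc : 0 ≤ c := hd.trans hdc
  have heS : CFC.sqrt d ∈ S := by
    rw [CFC.sqrt_eq_real_sqrt d hd, cfcₙ_eq_cfc]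
    exact cfc_mem (hs := hS) Real.sqrt hdS
  refine cuntzLEIn_of_forall_exists_norm_sub_le fun θ hθ => ?_
  set G := cfc (invSqrtAdd θ) c
  set e := CFC.sqrt d
  have hG : IsSelfAdjoint G := IsSelfAdjoint.cfc
  have he : IsSelfAdjoint e := (CFC.sqrt_nonneg d).isSelfAdjoint
  have hee : e * e = d := CFC.sqrt_mul_sqrt_self d hd
  have hGS : G ∈ S := cfc_mem (hs := hS) _ hcS
  refine ⟨e * (G * G), mul_mem heS (mul_mem hGS hGS), e, heS, ?_⟩
  have hexpand : e * (G * G) * c * e - d = -(θ • (star (G * e) * (G * e))) := by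
    rw [star_mul, hG.star_eq, he.star_eq, ← hee,
      show e * (G * G) * c * e = e * (G * G * c) * e by simp only [mul_assoc],
      cfc_invSqrtAdd_mul_self_mul hc hθ]
    simp only [mul_sub, sub_mul, mul_one, mul_smul_comm, smul_mul_assoc, mul_assoc]
    abel
  calc ‖e * (G * G) * c * e - d‖ = θ * ‖(G * e) * star (G * e)‖ := by
        rw [hexpand, norm_neg, norm_smul, Real.norm_of_nonneg hθ.le,
          CStarRing.norm_star_mul_self, CStarRing.norm_self_mul_star]
    _ = θ * ‖G * d * G‖ := by
        rw [star_mul, hG.star_eq, he.star_eq, ← hee]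
        simp only [mul_assoc]
    _ ≤ θ * ‖G * c * G‖ := by
        gcongr
        exact CStarAlgebra.norm_le_norm_of_nonneg_of_le (hG.conjugate_nonneg hd)
          (hG.conjugate_le_conjugate hdc)
    _ ≤ θ := mul_le_of_le_one_right hθ.le (norm_cfc_invSqrtAdd_mul_mul_le_one hc hθ)

lemma cuntzLEIn_cfc_max_sub_of_sub_le (hS : IsClosed (S : Set A)) {a c : A}
    (ha : IsSelfAdjoint a) (haS : a ∈ S) (hcS : c ∈ S) {ε : ℝ}
    (hac : a - algebraMap ℝ A ε ≤ c) : CuntzLEIn S (cfc (fun t => max (t - ε) 0) a) c := by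
  set m : ℝ → ℝ := fun t => max (t - ε) 0 with hm
  have hmc : Continuous m := by fun_prop
  have hsc : Continuous fun t => √(m t) := by fun_prop
  set p := cfc m a
  set h := cfc (fun t => √(m t)) a
  have hp : 0 ≤ p := cfc_nonneg fun t _ => le_max_right _ _
  have hpS : p ∈ S := cfc_mem (hs := hS) _ haS
  have hh : IsSelfAdjoint h := IsSelfAdjoint.cfc
  have hhS : h ∈ S := cfc_mem (hs := hS) _ haS
  have hpp : h * (a - algebraMap ℝ A ε) * h = p * p := by
    have hshift : a - algebraMap ℝ A ε = cfc (fun t => t - ε) a := by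
      rw [cfc_sub (fun t => t) (fun _ => ε) a, cfc_id' ℝ a, cfc_const ε a]
    rw [hshift, ← cfc_mul _ _ a hsc.continuousOn, ← cfc_mul _ _ a, ← cfc_mul m m a]
    refine cfc_congr fun t _ => ?_
    rw [mul_right_comm, Real.mul_self_sqrt (le_max_right _ _)]
    rcases max_cases (t - ε) 0 with ⟨hmt, -⟩ | ⟨hmt, -⟩ <;> simp [hm, hmt]
  have hpp_le : p * p ≤ h * c * h := hpp ▸ hh.conjugate_le_conjugate hac
  exact (cuntzLEIn_self_mul_self hS hp hpS).trans <|
    (cuntzLEIn_of_le hS hp.isSelfAdjoint.mul_self_nonneg hpp_le (mul_mem hpS hpS)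
      (mul_mem (mul_mem hhS hcS) hhS)).trans (cuntzLEIn_mul_mul hhS hhS c)

lemma cuntzLEIn_cfc_max_sub_of_norm_mul_mul_sub_le (hS : IsClosed (S : Set A)) {a b x y : A}
    (ha : IsSelfAdjoint a) (hb : 0 ≤ b) (haS : a ∈ S) (hbS : b ∈ S) (hxS : x ∈ S) (hyS : y ∈ S)
    {ε : ℝ} (h : ‖x * b * y - a‖ ≤ ε) : CuntzLEIn S (cfc (fun t => max (t - ε) 0) a) b := by
  set z := y + star x
  have hzS : z ∈ S := add_mem hyS (star_mem hxS)
  have hhalf : (2⁻¹ : ℝ) • star z ∈ S := by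
    rw [← Complex.coe_smul]
    exact S.smul_mem (star_mem hzS) _
  have hc : (2⁻¹ : ℝ) • (star z * b * z) = (2⁻¹ : ℝ) • star z * b * z := by
    rw [smul_mul_assoc, smul_mul_assoc]
  have hle : a - algebraMap ℝ A ε ≤ (2⁻¹ : ℝ) • (star z * b * z) := by
    refine (sub_le_comm.1 ?_).trans (realPart_mul_mul_le hb x y)
    refine (ha.sub (ℜ (x * b * y)).prop).le_algebraMap_of_norm_le ?_
    rw [norm_sub_rev]
    exact (ha.norm_realPart_sub_le _).trans h
  rw [hc] at hle
  exact (cuntzLEIn_cfc_max_sub_of_sub_le hS ha haS (mul_mem (mul_mem hhalf hbS) hzS) hle).trans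
    (cuntzLEIn_mul_mul hhalf hzS b)

lemma exists_nonneg_mem_cuntzLE_of_norm_sub_le (hS : IsClosed (S : Set A)) {b c : A}
    (hb : 0 ≤ b) (hcS : c ∈ S) {δ : ℝ} (h : ‖b - c‖ ≤ δ) :
    ∃ b' ∈ S, 0 ≤ b' ∧ ‖b - b'‖ ≤ 2 * δ ∧ CuntzLE b' b := by
  have hδ : 0 ≤ δ := (norm_nonneg _).trans h
  set s : A := (ℜ c : A)
  have hs : IsSelfAdjoint s := (ℜ c).prop
  have hsb : ‖s - b‖ ≤ δ := (hb.isSelfAdjoint.norm_realPart_sub_le c).trans (by rwa [norm_sub_rev])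
  refine ⟨cfc (fun t => max (t - δ) 0) s, cfc_mem (hs := hS) _ (realPart_mem hcS),
    cfc_nonneg fun _ _ => le_max_right _ _, ?_, ?_⟩
  · have hlow : algebraMap ℝ A (-δ) ≤ s := by
      have hbs : b - s ≤ algebraMap ℝ A δ :=
        (hb.isSelfAdjoint.sub hs).le_algebraMap_of_norm_le (by rwa [norm_sub_rev])
      rw [map_neg, neg_le]
      simpa using (sub_le_sub_right hb s).trans hbs
    calc ‖b - cfc (fun t => max (t - δ) 0) s‖
        ≤ ‖b - s‖ + ‖s - cfc (fun t => max (t - δ) 0) s‖ :=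
          norm_sub_le_norm_sub_add_norm_sub _ _ _
      _ ≤ δ + δ := add_le_add (by rwa [norm_sub_rev]) (norm_sub_cfc_max_sub_le hs hδ hlow)
      _ = 2 * δ := by ring
  · have hsb' : s - algebraMap ℝ A δ ≤ b :=
      sub_le_comm.1 ((hs.sub hb.isSelfAdjoint).le_algebraMap_of_norm_le hsb)
    exact (cuntzLEIn_cfc_max_sub_of_sub_le (S := ⊤) (by simp) hs (StarSubalgebra.mem_top)
      (StarSubalgebra.mem_top) hsb').cuntzLE

end CStarAlgebra

/-- if `A` is locally approximated by a collection of C*-subalgebras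
`C i`, then for positive `a ≾ b` in `A` and any `ε > 0` there are an index `i` and
positive `a_i, b_i ∈ C i` with `‖a − a_i‖ ≤ ε`, `‖b − b_i‖ ≤ ε`,
`(a_i − ε)₊ ≾ b_i` witnessed inside `C i`, and `b_i ≾ b` in `A`. -/
theorem cuntzLE_localize {A : Type*} [CStarAlgebra A] [PartialOrder A] [StarOrderedRing A]
    {ι : Type*} (C : ι → StarSubalgebra ℂ A) (hCclosed : ∀ i, IsClosed (C i : Set A))
    (happrox : ∀ (F : Finset A) (ε : ℝ), 0 < ε →
      ∃ i, ∀ f ∈ F, ∃ c ∈ C i, ‖f - c‖ ≤ ε)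
    (a b : A) (ha : 0 ≤ a) (hb : 0 ≤ b) (hab : CuntzLE a b)
    (ε : ℝ) (hε : 0 < ε) :
    ∃ (i : ι) (a' b' : A), a' ∈ C i ∧ b' ∈ C i ∧ 0 ≤ a' ∧ 0 ≤ b' ∧
      ‖a - a'‖ ≤ ε ∧ ‖b - b'‖ ≤ ε ∧
      CuntzLEIn (C i : Set A) (cfc (fun t : ℝ => max (t - ε) 0) a') b' ∧
      CuntzLE b' b := by
  classical
  obtain ⟨x, y, hxy⟩ := hab
  obtain ⟨N, hN⟩ : ∃ N, ‖x N * b * y N - a‖ < ε / 2 :=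
    ((tendsto_iff_norm_sub_tendsto_zero.1 hxy).eventually (gt_mem_nhds (half_pos hε))).exists
  obtain ⟨η, hη, hperturb⟩ :=
    exists_pos_norm_mul_mul_sub_lt (x N) b (y N) (by positivity : 0 < ε / 4)
  set δ := min (η / 3) (ε / 8)
  have hδη : δ ≤ η / 3 := min_le_left _ _
  have hδε : δ ≤ ε / 8 := min_le_right _ _
  obtain ⟨i, hi⟩ := happrox {a, b, x N, y N} δ (by positivity)
  obtain ⟨ca, hcaS, hca⟩ := hi a (by simp)
  obtain ⟨cb, hcbS, hcb⟩ := hi b (by simp)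
  obtain ⟨cx, hcxS, hcx⟩ := hi (x N) (by simp)
  obtain ⟨cy, hcyS, hcy⟩ := hi (y N) (by simp)
  obtain ⟨a', ha'S, ha', haa', -⟩ :=
    exists_nonneg_mem_cuntzLE_of_norm_sub_le (hCclosed i) ha hcaS hca
  obtain ⟨b', hb'S, hb', hbb', hb'b⟩ :=
    exists_nonneg_mem_cuntzLE_of_norm_sub_le (hCclosed i) hb hcbS hcb
  have hclose : ‖cx * b' * cy - a'‖ ≤ ε := by
    have h := hperturb cx b' cy (by rw [norm_sub_rev]; linarith) (by rw [norm_sub_rev]; linarith)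
      (by rw [norm_sub_rev]; linarith)
    have h₁ := norm_sub_le_norm_sub_add_norm_sub (cx * b' * cy) (x N * b * y N) a'
    have h₂ := norm_sub_le_norm_sub_add_norm_sub (x N * b * y N) a a'
    linarith
  exact ⟨i, a', b', ha'S, hb'S, ha', hb', by linarith, by linarith,
    cuntzLEIn_cfc_max_sub_of_norm_mul_mul_sub_le (hCclosed i) ha'.isSelfAdjoint hb' ha'S hb'S
      hcxS hcyS hclose, hb'b⟩
end
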